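/- Let G be a simple graph on a finite vertex set and let {u,v} be an edge of G. Then for every subset Y of the vertices, det((G[uv])[Y]) = det(G[Y ⊕ {u,v}]) over GF(2), where ⊕ is symmetric difference. -/

import Mathlib

set_option linter.unusedSectionVars false

variable {V : Type*} [Fintype V] [DecidableEq V]

/-- Local complementation at a vertex `w`: complement the edges within `N_G(w)`. -/
def SimpleGraph.localComp (G : SimpleGraph V) (w : V) : SimpleGraph V where
  Adj x y := x ≠ y ∧ Xor' (G.Adj x y) (G.Adj x w ∧ G.Adj y w)
  symm := by
    constructor
    intro x y ⟨hne, hx⟩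
    refine ⟨hne.symm, ?_⟩
    have h1 := G.adj_comm x y
    unfold Xor' at hx ⊢
    unfold Xor at hx ⊢
    tauto
  loopless := by constructor; intro x ⟨h, _⟩; exact h rfl

/-- `x ∼_G y` : `x = y` or `{x,y}` is an edge of `G`. -/
def SimpleGraph.nbr (G : SimpleGraph V) (x y : V) : Prop := x = y ∨ G.Adj x y

theorem SimpleGraph.nbr_comm (G : SimpleGraph V) (x y : V) : G.nbr x y ↔ G.nbr y x :=
  or_congr eq_comm (G.adj_comm x y)

private theorem xor_swap_right (a b c : Prop) : Xor' (Xor' a b) c ↔ Xor' (Xor' a c) b := by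
  unfold Xor'; unfold Xor; tauto

/-- The pivot `G[uv]` of `G` on an edge `{u,v}`, characterized by
`x ∼_{G[uv]} y ⟺ (x ∼_G y) XOR ((x ∼_G u) ∧ (y ∼_G v)) XOR ((x ∼_G v) ∧ (y ∼_G u))`. -/
def SimpleGraph.pivot (G : SimpleGraph V) (u v : V) : SimpleGraph V where
  Adj x y := x ≠ y ∧
    Xor' (Xor' (G.nbr x y) (G.nbr x u ∧ G.nbr y v)) (G.nbr x v ∧ G.nbr y u)
  symm := by
    constructor
    intro x y ⟨hne, hx⟩
    refine ⟨hne.symm, ?_⟩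
    show Xor' (Xor' (G.nbr y x) (G.nbr y u ∧ G.nbr x v)) (G.nbr y v ∧ G.nbr x u)
    rw [G.nbr_comm y x, and_comm (a := G.nbr y u) (b := G.nbr x v),
      and_comm (a := G.nbr y v) (b := G.nbr x u)]
    exact (xor_swap_right _ _ _).mp hx
  loopless := by constructor; intro x ⟨h, _⟩; exact h rfl

/-- Determinant over GF(2) of the adjacency matrix of the subgraph of `G` induced by `S`. -/
noncomputable def gdet (G : SimpleGraph V) (S : Finset V) : ZMod 2 := by
  classical
  exact Matrix.det (Matrix.of fun i j : S => if G.Adj i j then (1 : ZMod 2) else 0)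

/-- Apply a sequence of pivots (left to right). -/
def applyPivots (G : SimpleGraph V) : List (V × V) → SimpleGraph V
  | [] => G
  | p :: φ => applyPivots (G.pivot p.1 p.2) φ

/-- A sequence of pivots is applicable when each pair is an edge of the graph
obtained by applying all preceding pivots. -/
def PivotsApplicable (G : SimpleGraph V) : List (V × V) → Prop
  | [] => True
  | p :: φ => G.Adj p.1 p.2 ∧ PivotsApplicable (G.pivot p.1 p.2) φ

/-- The support of a sequence of pivots: vertices occurring an odd number of times. -/
def pivotSupport (φ : List (V × V)) : Finset V :=
  Finset.univ.filter fun x => Odd ((φ.flatMap fun p => [p.1, p.2]).count x)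

/-- A sequence of pivots is reduced if its pivot vertices are pairwise distinct. -/
def ReducedSeq (φ : List (V × V)) : Prop := (φ.flatMap fun p => [p.1, p.2]).Nodup

/-- The number of perfect matchings of the subgraph of `G` induced by `S`:
sets of edges of `G` inside `S` such that every vertex of `S` lies in exactly one of them. -/
noncomputable def pmCount (G : SimpleGraph V) (S : Finset V) : ℕ := by
  classical
  exact (Finset.univ.filter fun P : Finset (Sym2 V) =>
    (∀ e ∈ P, e ∈ G.edgeSet ∧ ∀ v ∈ e, v ∈ S) ∧
    ∀ v ∈ S, ∃! e, e ∈ P ∧ v ∈ e).card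

/-! Let `A` be the adjacency matrix of `G` over GF(2) and `A'` that of `G[uv]`, and for `X ⊆ V`
let `R_X(M) = piecewiseRows X M 1` be the matrix whose rows indexed by `X` are those of `M` and
whose other rows are those of the identity, so that `det R_X(M) = det M[X]`. Over GF(2) the
defining formula of the pivot says `A' + 1 = (A + 1) + (A + 1) E (A + 1)`, where `E` is the
adjacency matrix of the single edge `uv`; a short computation in the matrix ring then gives
`A' R_{uv}(A) = R_{V \ uv}(A)`. Multiplying row by row, `R_Y(A') R_{uv}(A) = R_{Y ⊕ uv}(A)`, and
`det R_{uv}(A) = det [[0, 1], [1, 0]] = 1`. -/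

namespace Matrix

variable {m n k α : Type*}

def piecewiseRows [DecidableEq m] (S : Finset m) (M N : Matrix m n α) : Matrix m n α :=
  of fun i => if i ∈ S then M i else N i

section piecewiseRows

variable [DecidableEq m] (S : Finset m)

@[simp]
theorem piecewiseRows_apply (M N : Matrix m n α) (i : m) (j : n) :
    piecewiseRows S M N i j = if i ∈ S then M i j else N i j := by
  simp only [piecewiseRows, of_apply]; split_ifs <;> rfl

theorem piecewiseRows_mul [Fintype n] [NonUnitalNonAssocSemiring α] (M₁ M₂ : Matrix m n α)
    (N : Matrix n k α) : piecewiseRows S M₁ M₂ * N = piecewiseRows S (M₁ * N) (M₂ * N) := by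
  ext i j
  by_cases hi : i ∈ S <;> simp [hi, mul_apply]

theorem piecewiseRows_piecewiseRows_symmDiff (T : Finset m) (M N : Matrix m n α) :
    piecewiseRows S (piecewiseRows T N M) (piecewiseRows T M N) =
      piecewiseRows (symmDiff S T) M N := by
  ext i j
  by_cases hS : i ∈ S <;> by_cases hT : i ∈ T <;> simp [hS, hT, Finset.mem_symmDiff]

theorem piecewiseRows_eq_mul_add_mul [Fintype m] [Ring α] (M N : Matrix m m α) :
    piecewiseRows S M N = piecewiseRows S 1 0 * M + (1 - piecewiseRows S 1 0) * N := by
  simp only [sub_mul, piecewiseRows_mul, one_mul, zero_mul]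
  ext i j
  by_cases hi : i ∈ S <;> simp [hi]

theorem det_piecewiseRows_one [Fintype m] [CommRing α] (M : Matrix m m α) :
    (piecewiseRows S M 1).det = (M.submatrix ((↑) : S → m) (↑)).det := by
  rw [← det_submatrix_equiv_self (Equiv.sumCompl (· ∈ S))]
  have hblocks : (piecewiseRows S M 1).submatrix (Equiv.sumCompl (· ∈ S))
      (Equiv.sumCompl (· ∈ S)) = fromBlocks (M.submatrix (↑) (↑)) (M.submatrix (↑) (↑)) 0 1 := by
    ext (i | i) (j | j)
    · simp [i.2]
    · simp [i.2]
    · simp [i.2, (ne_of_mem_of_not_mem j.2 i.2).symm]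
    · simp [i.2, one_apply, Subtype.ext_iff]
  rw [hblocks, det_fromBlocks_zero₂₁, det_one, mul_one]

theorem piecewiseRows_pair_one_zero [AddMonoidWithOne α] {u v : m} (huv : u ≠ v) :
    piecewiseRows {u, v} (1 : Matrix m m α) 0 = single u u 1 + single v v 1 := by
  ext i j
  rcases eq_or_ne u i with rfl | hu
  · simp [huv.symm, one_apply, single_apply]
  rcases eq_or_ne v i with rfl | hv
  · simp [huv, one_apply, single_apply]
  simp [hu, hv, hu.symm, hv.symm]

end piecewiseRows

theorem det_submatrix_pair [Fintype m] [DecidableEq m] [CommRing α] (M : Matrix m m α) {u v : m}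
    (huv : u ≠ v) :
    (M.submatrix ((↑) : ({u, v} : Finset m) → m) (↑)).det = M u u * M v v - M u v * M v u := by
  let e : Fin 2 → ({u, v} : Finset m) := ![⟨u, by simp⟩, ⟨v, by simp⟩]
  have he : Function.Bijective e := by
    refine ⟨fun i j hij => ?_, fun ⟨x, hx⟩ => ?_⟩
    · fin_cases i <;> fin_cases j <;> simp_all [e, Subtype.ext_iff, huv.symm]
    · rcases Finset.mem_insert.mp hx with rfl | hx
      · exact ⟨0, rfl⟩
      · exact ⟨1, by simp [e, Finset.mem_singleton.mp hx]⟩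
  rw [← det_submatrix_equiv_self (Equiv.ofBijective e he), det_fin_two]
  simp [e]

theorem mul_single_one_mul_apply [Fintype m] [DecidableEq m] [NonAssocSemiring α]
    (M N : Matrix m m α) (i j x y : m) :
    (M * single i j (1 : α) * N) x y = M x i * N j y := by
  simp [mul_apply, single_apply, ite_and]

end Matrix

/-- With `A` an adjacency matrix, `P` the projection onto `{u, v}` and `E = PAP` the adjacency matrix
of the edge `uv`, the left factor is the adjacency matrix of the pivot. -/
theorem pivot_mul_eq_of_charP_two {R : Type*} [Ring R] [CharP R 2] {A P E : R}
    (hPP : P * P = P) (hPAP : P * A * P = E) (hEE : E * E = P) :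
    (A + (A + 1) * E * (A + 1)) * (P * A + (1 - P)) = P + (1 - P) * A := by
  set X := A + (A + 1) * E * (A + 1) with hX
  have hEP : E * P = E := by rw [← hPAP, mul_assoc, hPP]
  have hEAP : E * A * P = P :=
    calc E * A * P = E * P * A * P := by rw [hEP]
      _ = E * (P * A * P) := by noncomm_ring
      _ = P := by rw [hPAP, hEE]
  have hXP : X * P = P + (A + 1) * E :=
    calc X * P = A * P + (A + 1) * (E * A * P + E * P) := by rw [hX]; noncomm_ring
      _ = (2 : R) * (A * P) + (P + (A + 1) * E) := by rw [hEAP, hEP]; noncomm_ring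
      _ = P + (A + 1) * E := by rw [CharTwo.two_eq_zero, zero_mul, zero_add]
  rw [← sub_eq_zero]
  calc X * (P * A + (1 - P)) - (P + (1 - P) * A)
      = X * P * A + X - X * P - (P + (1 - P) * A) := by noncomm_ring
    _ = (2 : R) * (P * A - P + (A + 1) * E * A) := by rw [hXP, hX]; noncomm_ring
    _ = 0 := by rw [CharTwo.two_eq_zero, zero_mul]

theorem CharTwo.ite_xor_eq_add {R : Type*} [Ring R] [CharP R 2] (p q : Prop) [Decidable p]
    [Decidable q] [Decidable (Xor' p q)] :
    (if Xor' p q then 1 else 0 : R) = (if p then 1 else 0) + (if q then 1 else 0) := by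
  split_ifs <;> simp_all [Xor', CharTwo.add_self_eq_zero]

namespace SimpleGraph

open Matrix

variable {W R : Type*} [DecidableEq W] (G : SimpleGraph W)

instance [DecidableRel G.Adj] : DecidableRel G.nbr := fun x y =>
  inferInstanceAs (Decidable (x = y ∨ G.Adj x y))

theorem adjMatrix_add_one_apply [DecidableRel G.Adj] [AddMonoidWithOne R] (x y : W) :
    (G.adjMatrix R + 1) x y = if G.nbr x y then 1 else 0 := by
  by_cases hxy : x = y
  · simp [hxy, nbr]
  · simp [hxy, nbr, one_apply_ne hxy]

variable [Fintype W]

theorem pivot_nbr_iff (u v x y : W) : (G.pivot u v).nbr x y ↔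
    Xor' (Xor' (G.nbr x y) (G.nbr x u ∧ G.nbr y v)) (G.nbr x v ∧ G.nbr y u) := by
  by_cases hxy : x = y
  · subst hxy
    simp only [nbr, true_or, true_iff]
    unfold Xor'; unfold Xor; tauto
  · rw [nbr, or_iff_right hxy]
    exact and_iff_right hxy

variable [DecidableRel G.Adj] (u v : W)

theorem adjMatrix_add_one_pivot [Ring R] [CharP R 2] [DecidableRel (G.pivot u v).Adj] :
    (G.pivot u v).adjMatrix R + 1 = G.adjMatrix R + 1 +
      (G.adjMatrix R + 1) * (single u v 1 + single v u 1) * (G.adjMatrix R + 1) := by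
  ext x y
  rw [adjMatrix_add_one_apply, Matrix.mul_add (G.adjMatrix R + 1), Matrix.add_mul,
    Matrix.add_apply (_ + _) _ x y, Matrix.add_apply (_ * _) _ x y,
    mul_single_one_mul_apply, mul_single_one_mul_apply]
  classical
  simp only [adjMatrix_add_one_apply, pivot_nbr_iff, G.nbr_comm v y, G.nbr_comm u y,
    CharTwo.ite_xor_eq_add, ite_zero_mul_ite_zero, mul_one, add_assoc]

variable {G u v}

theorem adjMatrix_pivot_mul_piecewiseRows [Ring R] [CharP R 2] [DecidableRel (G.pivot u v).Adj]
    (huv : G.Adj u v) :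
    (G.pivot u v).adjMatrix R * piecewiseRows {u, v} (G.adjMatrix R) 1 =
      piecewiseRows {u, v} 1 (G.adjMatrix R) := by
  have : Nonempty W := ⟨u⟩
  set A := G.adjMatrix R
  have hpivot : (G.pivot u v).adjMatrix R = A + (A + 1) * (single u v 1 + single v u 1) * (A + 1) :=
    add_right_cancel (b := 1) (by rw [adjMatrix_add_one_pivot]; abel)
  have hPP : (single u u 1 + single v v 1 : Matrix W W R) * (single u u 1 + single v v 1) =
      single u u 1 + single v v 1 := by
    simp [add_mul, mul_add, huv.ne, huv.ne.symm]
  have hPAP : (single u u 1 + single v v 1) * A * (single u u 1 + single v v 1) =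
      single u v 1 + single v u 1 := by
    simp [A, add_mul, mul_add, huv, huv.symm, add_comm]
  have hEE : (single u v 1 + single v u 1 : Matrix W W R) * (single u v 1 + single v u 1) =
      single u u 1 + single v v 1 := by
    simp [add_mul, mul_add, huv.ne, huv.ne.symm, add_comm]
  rw [hpivot, piecewiseRows_eq_mul_add_mul _ A, piecewiseRows_eq_mul_add_mul _ 1 A, mul_one,
    mul_one, piecewiseRows_pair_one_zero huv.ne]
  exact pivot_mul_eq_of_charP_two hPP hPAP hEE

end SimpleGraph

theorem gdet_eq_det_submatrix {W : Type*} [DecidableEq W] (G : SimpleGraph W) [DecidableRel G.Adj]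
    (S : Finset W) : gdet G S = ((G.adjMatrix (ZMod 2)).submatrix ((↑) : S → W) (↑)).det := by
  unfold gdet
  congr
  ext i j
  simp [SimpleGraph.adjMatrix_apply]

open Matrix in
/-- For an edge `{u,v}` of `G` and every vertex subset `Y`,
`det((G[uv])[Y]) = det(G[Y ⊕ {u,v}])` over GF(2). -/
theorem gdet_pivot (G : SimpleGraph V) (u v : V) (huv : G.Adj u v) (Y : Finset V) :
    gdet (G.pivot u v) Y = gdet G (symmDiff Y {u, v}) := by
  classical
  set A := G.adjMatrix (ZMod 2)
  have hdet : (piecewiseRows {u, v} A 1).det = 1 := by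
    rw [det_piecewiseRows_one, det_submatrix_pair A huv.ne]
    simp [A, huv, huv.symm]
  calc gdet (G.pivot u v) Y = (piecewiseRows Y ((G.pivot u v).adjMatrix (ZMod 2)) 1).det := by
        rw [gdet_eq_det_submatrix, det_piecewiseRows_one]
    _ = (piecewiseRows Y ((G.pivot u v).adjMatrix (ZMod 2)) 1 * piecewiseRows {u, v} A 1).det := by
        rw [det_mul, hdet, mul_one]
    _ = (piecewiseRows (symmDiff Y {u, v}) A 1).det := by
        rw [piecewiseRows_mul, one_mul, SimpleGraph.adjMatrix_pivot_mul_piecewiseRows huv,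
          piecewiseRows_piecewiseRows_symmDiff]
    _ = gdet G (symmDiff Y {u, v}) := by
        rw [gdet_eq_det_submatrix, det_piecewiseRows_one]
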